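/- Shapley's theorem (scalar case): For every positive integer n there exists a unique value operator Φ : 𝒢ₙ → ℝⁿ satisfying efficiency, symmetry, dummy, and additivity, and for each game v ∈ 𝒢ₙ and player i ∈ {1,…,n} it is given by φᵢ(v) = (1/n!) Σ_{π ∈ Sₙ} [v(Pᵢ(π) ∪ {i}) − v(Pᵢ(π))], where Sₙ is the set of permutations of [n] and Pᵢ(π) is the set of players preceding i in π. -/
import Mathlib


open Finset

/-- `preceding n π i` is the set `Pᵢ(π)` of players preceding `i` in the ordering
given by the permutation `π` of `[n]`. -/
def preceding (n : ℕ) (π : Equiv.Perm (Fin n)) (i : Fin n) : Finset (Fin n) :=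
  Finset.univ.filter fun j => π.symm j < π.symm i

/-- The scalar Shapley value in permutation form:
`φᵢ(v) = (1/n!) Σ_{π ∈ Sₙ} [v(Pᵢ(π) ∪ {i}) − v(Pᵢ(π))]`. -/
noncomputable def scalarPermShap (n : ℕ) (v : Finset (Fin n) → ℝ) (i : Fin n) : ℝ :=
  ((Nat.factorial n : ℝ))⁻¹ *
    ∑ π : Equiv.Perm (Fin n), (v (insert i (preceding n π i)) - v (preceding n π i))

/-- Efficiency axiom for a scalar value operator. -/
def IsEfficient (n : ℕ) (Φ : (Finset (Fin n) → ℝ) → (Fin n → ℝ)) : Prop :=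
  ∀ v : Finset (Fin n) → ℝ, v ∅ = 0 → ∑ i : Fin n, Φ v i = v Finset.univ

/-- Symmetry axiom. -/
def IsSymmetric (n : ℕ) (Φ : (Finset (Fin n) → ℝ) → (Fin n → ℝ)) : Prop :=
  ∀ v : Finset (Fin n) → ℝ, v ∅ = 0 → ∀ i j : Fin n,
    (∀ S : Finset (Fin n), i ∉ S → j ∉ S → v (insert i S) = v (insert j S)) →
    Φ v i = Φ v j

/-- Dummy (null player) axiom. -/
def IsDummy (n : ℕ) (Φ : (Finset (Fin n) → ℝ) → (Fin n → ℝ)) : Prop :=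
  ∀ v : Finset (Fin n) → ℝ, v ∅ = 0 → ∀ i : Fin n,
    (∀ S : Finset (Fin n), i ∉ S → v (insert i S) = v S) → Φ v i = 0

/-- Additivity axiom. -/
def IsAdditive (n : ℕ) (Φ : (Finset (Fin n) → ℝ) → (Fin n → ℝ)) : Prop :=
  ∀ v w : Finset (Fin n) → ℝ, v ∅ = 0 → w ∅ = 0 → ∀ α β : ℝ,
    Φ (α • v + β • w) = α • Φ v + β • Φ w

section ShapleyAux

open Finset

variable (n : ℕ)

/-! ### The permutation formula satisfies the axioms -/

lemma preceding_notMem (π : Equiv.Perm (Fin n)) (i : Fin n) : i ∉ preceding n π i := by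
  simp [preceding]

lemma perm_dummy : IsDummy n (scalarPermShap n) := by
  intro v hv i hi
  unfold scalarPermShap
  have h : ∀ π : Equiv.Perm (Fin n),
      v (insert i (preceding n π i)) - v (preceding n π i) = 0 := by
    intro π
    rw [hi _ (preceding_notMem n π i), sub_self]
  simp [h]

lemma perm_add : IsAdditive n (scalarPermShap n) := by
  intro v w hv hw α β
  funext i
  simp only [Pi.add_apply, Pi.smul_apply, smul_eq_mul, scalarPermShap]
  have h : ∀ π : Equiv.Perm (Fin n),
      (α * v (insert i (preceding n π i)) + β * w (insert i (preceding n π i)) -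
        (α * v (preceding n π i) + β * w (preceding n π i)))
      = α * (v (insert i (preceding n π i)) - v (preceding n π i))
        + β * (w (insert i (preceding n π i)) - w (preceding n π i)) := fun π => by ring
  simp_rw [h, Finset.sum_add_distrib, ← Finset.mul_sum]
  ring

lemma perm_eff : IsEfficient n (scalarPermShap n) := by
  intro v hv
  unfold scalarPermShap
  rw [← Finset.mul_sum, Finset.sum_comm]
  have key : ∀ π : Equiv.Perm (Fin n),
      ∑ i : Fin n, (v (insert i (preceding n π i)) - v (preceding n π i))
        = v Finset.univ := by
    intro π
    set g : ℕ → ℝ := fun k => v (Finset.univ.filter fun j => (π.symm j : ℕ) < k) with hg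
    have h1 : ∀ i : Fin n, v (preceding n π i) = g ((π.symm i : ℕ)) := by
      intro i
      simp only [hg, preceding]
      congr 1
    have h2 : ∀ i : Fin n, v (insert i (preceding n π i)) = g ((π.symm i : ℕ) + 1) := by
      intro i
      simp only [hg]
      congr 1
      ext j
      simp only [preceding, Finset.mem_insert, Finset.mem_filter, Finset.mem_univ,
        true_and, Fin.lt_def, Nat.lt_succ_iff]
      constructor
      · rintro (rfl | h)
        · exact le_rfl
        · exact Nat.le_of_lt h
      · intro h
        rcases Nat.lt_or_ge (π.symm j : ℕ) (π.symm i : ℕ) with h' | h'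
        · exact Or.inr h'
        · left
          have : π.symm j = π.symm i := Fin.ext (le_antisymm h h')
          exact π.symm.injective this
    calc ∑ i : Fin n, (v (insert i (preceding n π i)) - v (preceding n π i))
        = ∑ i : Fin n, (g ((π.symm i : ℕ) + 1) - g ((π.symm i : ℕ))) := by
          refine Finset.sum_congr rfl fun i _ => ?_
          rw [h1, h2]
      _ = ∑ k : Fin n, (g ((k : ℕ) + 1) - g ((k : ℕ))) :=
          Equiv.sum_comp π.symm (fun k : Fin n => g ((k : ℕ) + 1) - g ((k : ℕ)))
      _ = ∑ k ∈ Finset.range n, (g (k + 1) - g k) :=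
          Fin.sum_univ_eq_sum_range (fun k => g (k + 1) - g k) n
      _ = g n - g 0 := Finset.sum_range_sub g n
      _ = v Finset.univ := by
          have e1 : (Finset.univ.filter fun j : Fin n => (π.symm j : ℕ) < n)
              = Finset.univ := by
            apply Finset.filter_true_of_mem
            intro j _
            exact (π.symm j).is_lt
          have e2 : (Finset.univ.filter fun j : Fin n => (π.symm j : ℕ) < 0)
              = (∅ : Finset (Fin n)) := by
            apply Finset.filter_false_of_mem
            intro j _
            exact Nat.not_lt_zero _
          simp only [hg, e1, e2, hv, sub_zero]
  rw [Finset.sum_congr rfl fun π _ => key π, Finset.sum_const, Finset.card_univ,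
    Fintype.card_perm, Fintype.card_fin, nsmul_eq_mul]
  rw [← mul_assoc, inv_mul_cancel₀ (by exact_mod_cast Nat.factorial_ne_zero n), one_mul]

lemma perm_symm : IsSymmetric n (scalarPermShap n) := by
  intro v hv i j hsym
  by_cases hij : i = j
  · rw [hij]
  unfold scalarPermShap
  congr 1
  set σ : Equiv.Perm (Fin n) := Equiv.swap i j with hσ
  rw [← Equiv.sum_comp (Equiv.mulLeft σ)
    (fun π => v (insert i (preceding n π i)) - v (preceding n π i))]
  refine Finset.sum_congr rfl fun π _ => ?_
  have happ : ∀ l : Fin n, ((Equiv.mulLeft σ π).symm l) = π.symm (σ l) := by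
    intro l
    simp [Equiv.mulLeft, Equiv.Perm.mul_def, hσ, Equiv.swap_inv]
  have hP : preceding n (Equiv.mulLeft σ π) i = (preceding n π j).image σ := by
    ext l
    simp only [preceding, Finset.mem_filter, Finset.mem_univ, true_and, Finset.mem_image]
    rw [happ, happ]
    have hσi : σ i = j := Equiv.swap_apply_left i j
    rw [hσi]
    constructor
    · intro h
      exact ⟨σ l, h, by simp [hσ]⟩
    · rintro ⟨m, hm, rfl⟩
      simpa [hσ] using hm
  set P := preceding n π j with hPdef
  have hjP : j ∉ P := preceding_notMem n π j
  by_cases hiP : i ∈ P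
  · have himg : P.image σ = insert j (P.erase i) := by
      ext x
      simp only [Finset.mem_image, Finset.mem_insert, Finset.mem_erase]
      constructor
      · rintro ⟨m, hm, rfl⟩
        by_cases hmi : m = i
        · left; rw [hmi]; exact Equiv.swap_apply_left i j
        by_cases hmj : m = j
        · exact absurd (hmj ▸ hm) hjP
        right
        rw [show σ m = m from Equiv.swap_apply_of_ne_of_ne hmi hmj]
        exact ⟨hmi, hm⟩
      · rintro (hxj | ⟨hx, hxP⟩)
        · exact ⟨i, hiP, by rw [hxj]; exact Equiv.swap_apply_left i j⟩
        · refine ⟨x, hxP, ?_⟩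
          have hxj : x ≠ j := fun h => hjP (h ▸ hxP)
          exact Equiv.swap_apply_of_ne_of_ne hx hxj
    have hiS0 : i ∉ P.erase i := Finset.notMem_erase _ _
    have hjS0 : j ∉ P.erase i := fun h => hjP (Finset.mem_of_mem_erase h)
    have hPS0 : P = insert i (P.erase i) := (Finset.insert_erase hiP).symm
    rw [hP, himg]
    have e1 : insert i (insert j (P.erase i)) = insert j (insert i (P.erase i)) :=
      Finset.insert_comm i j (P.erase i)
    have e2 : v (insert j (P.erase i)) = v (insert i (P.erase i)) :=
      (hsym (P.erase i) hiS0 hjS0).symm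
    rw [e1, e2, ← hPS0]
  · have himg : P.image σ = P := by
      have hfix : ∀ x ∈ P, σ x = x := by
        intro x hx
        have hxi : x ≠ i := fun h => hiP (h ▸ hx)
        have hxj : x ≠ j := fun h => hjP (h ▸ hx)
        exact Equiv.swap_apply_of_ne_of_ne hxi hxj
      calc P.image σ = P.image id := Finset.image_congr fun x hx => hfix x (by simpa using hx)
        _ = P := Finset.image_id
    rw [hP, himg, hsym P hiP hjP]

/-! ### Unanimity games and Harsanyi dividends -/

/-- The unanimity game on coalition `S`. -/
def unan (S : Finset (Fin n)) : Finset (Fin n) → ℝ := fun T => if S ⊆ T then 1 else 0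

/-- Harsanyi dividend (Möbius transform) of a game. -/
def harsanyi (v : Finset (Fin n) → ℝ) (S : Finset (Fin n)) : ℝ :=
  ∑ A ∈ S.powerset, (-1 : ℝ) ^ (S.card + A.card) * v A

lemma neg_one_pow_sum {α : Type*} [DecidableEq α] (U : Finset α) :
    (∑ B ∈ U.powerset, (-1 : ℝ) ^ B.card) = if U = ∅ then 1 else 0 := by
  have h := Finset.sum_powerset_neg_one_pow_card (x := U)
  have h2 := congrArg (fun z : ℤ => (z : ℝ)) h
  push_cast at h2
  simpa [apply_ite (fun z : ℤ => (z : ℝ))] using h2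

lemma shapInnerSum (T A : Finset (Fin n)) (hA : A ⊆ T) :
    (∑ S ∈ T.powerset.filter (fun S => A ⊆ S), (-1 : ℝ) ^ (S.card + A.card))
      = if A = T then 1 else 0 := by
  have hbij := Finset.sum_nbij' (s := T.powerset.filter (fun S => A ⊆ S))
    (t := (T \ A).powerset)
    (f := fun S => (-1 : ℝ) ^ (S.card + A.card)) (g := fun B => (-1 : ℝ) ^ B.card)
    (fun S => S \ A) (fun B => A ∪ B)
    (by
      intro S hS
      simp only [Finset.mem_filter, Finset.mem_powerset] at hS ⊢
      exact Finset.sdiff_subset_sdiff hS.1 (Finset.Subset.refl A))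
    (by
      intro B hB
      simp only [Finset.mem_powerset] at hB
      simp only [Finset.mem_filter, Finset.mem_powerset]
      exact ⟨Finset.union_subset hA (hB.trans Finset.sdiff_subset), Finset.subset_union_left⟩)
    (by
      intro S hS
      simp only [Finset.mem_filter, Finset.mem_powerset] at hS
      exact Finset.union_sdiff_of_subset hS.2)
    (by
      intro B hB
      simp only [Finset.mem_powerset] at hB
      have hdisj : Disjoint A B := Finset.disjoint_of_subset_right hB Finset.disjoint_sdiff
      exact Finset.union_sdiff_cancel_left hdisj)
    (by
      intro S hS
      simp only [Finset.mem_filter, Finset.mem_powerset] at hS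
      have hle : A.card ≤ S.card := Finset.card_le_card hS.2
      have hcard : (S \ A).card = S.card - A.card := Finset.card_sdiff_of_subset hS.2
      have hexp : S.card + A.card = (S \ A).card + 2 * A.card := by omega
      show (-1 : ℝ) ^ (S.card + A.card) = (-1 : ℝ) ^ (S \ A).card
      rw [hexp, pow_add, pow_mul]
      norm_num)
  rw [hbij, neg_one_pow_sum]
  by_cases h : A = T
  · simp [h]
  · rw [if_neg h, if_neg (fun hc => h (Finset.Subset.antisymm hA
      (Finset.sdiff_eq_empty_iff_subset.mp hc)))]

lemma harsanyi_empty (v : Finset (Fin n) → ℝ) (hv : v ∅ = 0) : harsanyi n v ∅ = 0 := by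
  simp [harsanyi, hv]

lemma decomp (v : Finset (Fin n) → ℝ) (T : Finset (Fin n)) :
    ∑ S ∈ T.powerset, harsanyi n v S = v T := by
  unfold harsanyi
  have h1 : ∀ S ∈ T.powerset,
      (∑ A ∈ S.powerset, (-1 : ℝ) ^ (S.card + A.card) * v A)
      = ∑ A ∈ T.powerset, if A ⊆ S then (-1 : ℝ) ^ (S.card + A.card) * v A else 0 := by
    intro S hS
    rw [Finset.sum_ite, Finset.sum_const_zero, add_zero]
    congr 1
    ext A
    simp only [Finset.mem_filter, Finset.mem_powerset]
    rw [Finset.mem_powerset] at hS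
    exact ⟨fun h => ⟨h.trans hS, h⟩, fun h => h.2⟩
  rw [Finset.sum_congr rfl h1, Finset.sum_comm]
  have h2 : ∀ A ∈ T.powerset,
      (∑ S ∈ T.powerset, if A ⊆ S then (-1 : ℝ) ^ (S.card + A.card) * v A else 0)
      = (if A = T then 1 else 0) * v A := by
    intro A hA
    rw [Finset.sum_ite, Finset.sum_const_zero, add_zero, ← Finset.sum_mul,
      shapInnerSum n T A (Finset.mem_powerset.mp hA)]
  rw [Finset.sum_congr rfl h2]
  simp only [ite_mul, one_mul, zero_mul]
  rw [Finset.sum_ite_eq' T.powerset T v]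
  simp

lemma v_eq_sum_unan (v : Finset (Fin n) → ℝ) (hv : v ∅ = 0) :
    v = ∑ S ∈ (Finset.univ : Finset (Fin n)).powerset.filter (fun S => S.Nonempty),
          harsanyi n v S • unan n S := by
  funext T
  rw [Finset.sum_apply]
  simp only [Pi.smul_apply, unan, smul_eq_mul, mul_ite, mul_one, mul_zero]
  rw [Finset.sum_ite, Finset.sum_const_zero, add_zero]
  have hset : ((Finset.univ : Finset (Fin n)).powerset.filter
        (fun S => S.Nonempty)).filter (fun S => S ⊆ T)
      = T.powerset.filter (fun S => S.Nonempty) := by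
    ext S
    simp only [Finset.mem_filter, Finset.mem_powerset]
    constructor
    · rintro ⟨⟨-, h1⟩, h2⟩; exact ⟨h2, h1⟩
    · rintro ⟨h1, h2⟩; exact ⟨⟨Finset.subset_univ S, h2⟩, h1⟩
  rw [hset]
  have hext : ∑ S ∈ T.powerset.filter (fun S => S.Nonempty), harsanyi n v S
      = ∑ S ∈ T.powerset, harsanyi n v S := by
    apply Finset.sum_subset (Finset.filter_subset _ _)
    intro S hS hS'
    have : S = ∅ := by
      simp only [Finset.mem_filter, hS, true_and] at hS'
      exact Finset.not_nonempty_iff_eq_empty.mp hS'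
    rw [this]
    exact harsanyi_empty n v hv
  rw [hext, decomp n v T]

/-! ### Consequences of the axioms -/

lemma phi_zero (Φ : (Finset (Fin n) → ℝ) → (Fin n → ℝ)) (hadd : IsAdditive n Φ) :
    Φ 0 = 0 := by
  have h := hadd 0 0 rfl rfl 1 1
  have e : (1 : ℝ) • (0 : Finset (Fin n) → ℝ) + (1 : ℝ) • 0 = 0 := by
    funext T; simp
  rw [e] at h
  funext i
  have h'' : Φ 0 i = Φ 0 i + Φ 0 i := by
    have := congrFun h i
    simpa using this
  have hz : Φ 0 i = 0 := by linarith
  simpa using hz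

lemma phi_sum (Φ : (Finset (Fin n) → ℝ) → (Fin n → ℝ)) (hadd : IsAdditive n Φ)
    {ι : Type*} [DecidableEq ι] (t : Finset ι) (f : ι → (Finset (Fin n) → ℝ)) :
    (∀ s ∈ t, f s ∅ = 0) → Φ (∑ s ∈ t, f s) = ∑ s ∈ t, Φ (f s) := by
  induction t using Finset.induction_on with
  | empty => intro _; simpa using phi_zero n Φ hadd
  | @insert a t ha ih =>
    intro h0
    rw [Finset.sum_insert ha, Finset.sum_insert ha]
    have h1 : f a ∅ = 0 := h0 a (Finset.mem_insert_self _ _)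
    have h2 : (∑ s ∈ t, f s) ∅ = 0 := by
      rw [Finset.sum_apply]
      exact Finset.sum_eq_zero fun s hs => h0 s (Finset.mem_insert_of_mem hs)
    have h := hadd (f a) (∑ s ∈ t, f s) h1 h2 1 1
    rw [one_smul, one_smul, one_smul, one_smul] at h
    rw [h, ih (fun s hs => h0 s (Finset.mem_insert_of_mem hs))]

lemma phi_unan (Φ : (Finset (Fin n) → ℝ) → (Fin n → ℝ))
    (heff : IsEfficient n Φ) (hsym : IsSymmetric n Φ) (hdum : IsDummy n Φ)
    (S : Finset (Fin n)) (hS : S.Nonempty) (c : ℝ) (i : Fin n) :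
    Φ (c • unan n S) i = if i ∈ S then c / S.card else 0 := by
  classical
  set w := c • unan n S with hw
  have hSne : S ≠ ∅ := Finset.nonempty_iff_ne_empty.mp hS
  have hw0 : w ∅ = 0 := by
    simp only [hw, Pi.smul_apply, unan, smul_eq_mul]
    rw [if_neg (by
      intro h
      exact hSne (Finset.subset_empty.mp h))]
    ring
  have hdummy : ∀ j : Fin n, j ∉ S → Φ w j = 0 := by
    intro j hj
    refine hdum w hw0 j ?_
    intro T hjT
    simp only [hw, Pi.smul_apply, unan, smul_eq_mul,
      Finset.subset_insert_iff_of_notMem hj]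
  by_cases hi : i ∈ S
  · have hsame : ∀ j ∈ S, Φ w j = Φ w i := by
      intro j hj
      by_cases hji : j = i
      · rw [hji]
      refine hsym w hw0 j i ?_
      intro T hjT hiT
      simp only [hw, Pi.smul_apply, unan, smul_eq_mul]
      rw [if_neg, if_neg]
      · intro h
        rcases Finset.mem_insert.mp (h hj) with h' | h'
        · exact hji h'
        · exact hjT h'
      · intro h
        rcases Finset.mem_insert.mp (h hi) with h' | h'
        · exact hji h'.symm
        · exact hiT h'
    have heq := heff w hw0
    have hsplit : ∑ j ∈ S, Φ w j = ∑ j : Fin n, Φ w j := by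
      apply Finset.sum_subset (Finset.subset_univ S)
      intro j _ hj
      exact hdummy j hj
    have hconst : ∑ j ∈ S, Φ w j = (S.card : ℝ) * Φ w i := by
      rw [Finset.sum_congr rfl hsame, Finset.sum_const, nsmul_eq_mul]
    have hwuniv : w Finset.univ = c := by
      simp [hw, unan, Finset.subset_univ]
    have hfin : (S.card : ℝ) * Φ w i = c := by
      rw [← hconst, hsplit, heq, hwuniv]
    have hcard : (S.card : ℝ) ≠ 0 := by
      exact_mod_cast Finset.card_ne_zero_of_mem hi
    rw [if_pos hi, eq_div_iff hcard, mul_comm]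
    exact hfin
  · rw [if_neg hi]
    exact hdummy i hi

lemma phi_formula (Φ : (Finset (Fin n) → ℝ) → (Fin n → ℝ))
    (heff : IsEfficient n Φ) (hsym : IsSymmetric n Φ) (hdum : IsDummy n Φ)
    (hadd : IsAdditive n Φ) (v : Finset (Fin n) → ℝ) (hv : v ∅ = 0) (i : Fin n) :
    Φ v i = ∑ S ∈ (Finset.univ : Finset (Fin n)).powerset.filter (fun S => S.Nonempty),
      (if i ∈ S then harsanyi n v S / S.card else 0) := by
  classical
  conv_lhs => rw [v_eq_sum_unan n v hv]
  have h0 : ∀ S ∈ (Finset.univ : Finset (Fin n)).powerset.filter (fun S => S.Nonempty),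
      (harsanyi n v S • unan n S) ∅ = 0 := by
    intro S hS
    have hSne : S.Nonempty := (Finset.mem_filter.mp hS).2
    simp only [Pi.smul_apply, unan, smul_eq_mul]
    rw [if_neg (by
      intro h
      exact Finset.nonempty_iff_ne_empty.mp hSne (Finset.subset_empty.mp h))]
    ring
  rw [phi_sum n Φ hadd _ _ h0, Finset.sum_apply]
  refine Finset.sum_congr rfl fun S hS => ?_
  have hSne : S.Nonempty := (Finset.mem_filter.mp hS).2
  exact phi_unan n Φ heff hsym hdum S hSne (harsanyi n v S) i

end ShapleyAux

/-- **Shapley's theorem (scalar case).**  There exists a value operator satisfying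
efficiency, symmetry, dummy, and additivity, given on every game by the permutation
formula; moreover any value operator satisfying the four axioms coincides with the
permutation formula on every game. -/
theorem scalar_Shapley_existence_uniqueness (n : ℕ) (hn : 0 < n) :
    (∃ Φ : (Finset (Fin n) → ℝ) → (Fin n → ℝ),
      IsEfficient n Φ ∧ IsSymmetric n Φ ∧ IsDummy n Φ ∧ IsAdditive n Φ ∧
      ∀ v : Finset (Fin n) → ℝ, v ∅ = 0 → ∀ i : Fin n, Φ v i = scalarPermShap n v i) ∧
    (∀ Φ : (Finset (Fin n) → ℝ) → (Fin n → ℝ),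
      IsEfficient n Φ → IsSymmetric n Φ → IsDummy n Φ → IsAdditive n Φ →
      ∀ v : Finset (Fin n) → ℝ, v ∅ = 0 → ∀ i : Fin n, Φ v i = scalarPermShap n v i) := by
  constructor
  · exact ⟨scalarPermShap n, perm_eff n, perm_symm n, perm_dummy n, perm_add n,
      fun v hv i => rfl⟩
  · intro Φ heff hsym hdum hadd v hv i
    rw [phi_formula n Φ heff hsym hdum hadd v hv i,
      ← phi_formula n (scalarPermShap n) (perm_eff n) (perm_symm n) (perm_dummy n)
        (perm_add n) v hv i]
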